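/- (Lemma 1, sufficiency of the cumulative-reward-augmented state for VaR.) In a finite-horizon MDP with SAS reward r, salvage v, and threshold τ ∈ ℝ: the supremum over all history-dependent deterministic policies π of the probability P_π(Φ_π ≥ τ) := Σ_{ω : Φ_π(ω) ≥ τ} P_π(ω) equals the supremum of the same quantity taken only over the history-dependent policies induced by augmented policies σ : Fin N → S × ℝ → A, where the policy induced by σ chooses at time t on history (x_0,…,x_t) the action σ t (x_t, c_t), with c_0 = 0 and c_{s+1} = c_s + r x_s (σ s (x_s, c_s)) x_{s+1}. In other words, the optimal VaR probability of the original MDP equals the optimal value of the augmented-state 0-1 MDP whose state is the pair (current state, cumulative reward) and whose only reward is the terminal indicator 1[c_N + v(x_N) ≥ τ]. -/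

import Mathlib

/-- The action function induced by a history-dependent deterministic policy
`π : (t : Fin N) → (Fin (t+1) → S) → A`: at time `t` on the path `ω`, it applies `π t`
to the history `(ω 0, …, ω t)`. -/
def histAct {S A : Type} (N : ℕ) (π : (t : Fin N) → (Fin (t.val + 1) → S) → A)
    (t : Fin N) (ω : Fin (N + 1) → S) : A :=
  π t (fun s => ω (Fin.castLE (Nat.succ_le_succ t.isLt.le) s))

/-- The cumulative reward sequence `c` along a path `ω` under an augmented policy
`σ : Fin N → S × ℝ → A`: `c 0 = 0` and
`c (s+1) = c s + r (ω s) (σ s (ω s, c s)) (ω (s+1))`. -/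
noncomputable def cumReward {S A : Type} (N : ℕ) (r : S → A → S → ℝ)
    (σ : Fin N → S × ℝ → A) (ω : Fin (N + 1) → S) : ℕ → ℝ
  | 0 => 0
  | s + 1 =>
      if h : s < N then
        cumReward N r σ ω s +
          r (ω ⟨s, Nat.lt_succ_of_lt h⟩)
            (σ ⟨s, h⟩ (ω ⟨s, Nat.lt_succ_of_lt h⟩, cumReward N r σ ω s))
            (ω ⟨s + 1, Nat.succ_lt_succ h⟩)
      else cumReward N r σ ω s

/-- The (history-dependent) action function induced by an augmented policy
`σ : Fin N → S × ℝ → A`: at time `t` on the path `ω`, it chooses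
`σ t (ω t, c t)` where `c` is the cumulative reward sequence. -/
noncomputable def augAct {S A : Type} (N : ℕ) (r : S → A → S → ℝ)
    (σ : Fin N → S × ℝ → A) (t : Fin N) (ω : Fin (N + 1) → S) : A :=
  σ t (ω t.castSucc, cumReward N r σ ω t.val)

open Classical in
/-- The probability `P_π(Φ_π ≥ τ)` that the total reward reaches the threshold `τ`,
for the history-dependent policy with action function `act`. -/
noncomputable def varProb {S A : Type} [Fintype S] (N : ℕ)
    (p : S → A → S → ℝ) (r : S → A → S → ℝ) (μ0 : S → ℝ) (v : S → ℝ) (τ : ℝ)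
    (act : Fin N → (Fin (N + 1) → S) → A) : ℝ :=
  ∑ ω : Fin (N + 1) → S,
    if τ ≤ (∑ t : Fin N, r (ω t.castSucc) (act t ω) (ω t.succ)) + v (ω (Fin.last N)) then
      μ0 (ω 0) * ∏ t : Fin N, p (ω t.castSucc) (act t ω) (ω t.succ)
    else 0


/-! Both suprema are attained and equal `∑ x, μ0 x * optValue N x 0`, the optimal value of the
augmented 0-1 MDP. Weight each length-`k` history of a non-anticipating policy by its probability
times the optimal value to go from its current state and accumulated reward; this
`partialValue k` equals the optimal value at `k = 0` and `P(Φ ≥ τ)` at `k = N`, and it can only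
decrease from `k` to `k + 1`, since the action actually taken at time `k` is at best optimal.
For the augmented policy that acts greedily with respect to `optValue`, every step is an
equality; and an augmented policy is also history-dependent, since the cumulative reward is a
function of the history. -/

namespace VaRMDP

variable {S A : Type}

def IsNonanticipating {N : ℕ} (act : Fin N → (Fin (N + 1) → S) → A) : Prop :=
  ∀ (t : Fin N) (ω ω' : Fin (N + 1) → S),
    (∀ i : Fin (N + 1), i.val ≤ t.val → ω i = ω' i) → act t ω = act t ω'

theorem histAct_isNonanticipating (N : ℕ) (π : (t : Fin N) → (Fin (t.val + 1) → S) → A) :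
    IsNonanticipating (histAct N π) := fun t _ _ h =>
  congrArg (π t) (funext fun s => h _ (Nat.lt_succ_iff.mp s.isLt))

theorem cumReward_congr {N k : ℕ} (r : S → A → S → ℝ) (σ : Fin N → S × ℝ → A)
    {ω ω' : Fin (N + 1) → S} (h : ∀ i : Fin (N + 1), i.val ≤ k → ω i = ω' i) :
    cumReward N r σ ω k = cumReward N r σ ω' k := by
  induction k with
  | zero => rfl
  | succ s ih =>
    have ih := ih fun i hi => h i (Nat.le_succ_of_le hi)
    unfold cumReward
    by_cases hs : s < N
    · rw [dif_pos hs, dif_pos hs, ih, h ⟨s, Nat.lt_succ_of_lt hs⟩ (Nat.le_succ s),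
        h ⟨s + 1, Nat.succ_lt_succ hs⟩ le_rfl]
    · rw [dif_neg hs, dif_neg hs, ih]

theorem augAct_isNonanticipating (N : ℕ) (r : S → A → S → ℝ) (σ : Fin N → S × ℝ → A) :
    IsNonanticipating (augAct N r σ) := fun t _ _ h => by
  rw [augAct, augAct, h t.castSucc le_rfl, cumReward_congr r σ h]

def padPath {k n : ℕ} (ω : Fin (k + 1) → S) : Fin (n + 1) → S :=
  fun i => ω ⟨min i.val k, Nat.lt_succ_of_le (min_le_right _ _)⟩

theorem padPath_apply_of_le {k n : ℕ} (ω : Fin (k + 1) → S) (i : Fin (n + 1)) (hi : i.val ≤ k) :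
    padPath ω i = ω ⟨i.val, Nat.lt_succ_of_le hi⟩ := by
  simp only [padPath, min_eq_left hi]

theorem padPath_self {n : ℕ} (ω : Fin (n + 1) → S) : padPath ω = ω :=
  funext fun i => padPath_apply_of_le ω i (Nat.lt_succ_iff.mp i.isLt)

theorem padPath_snoc_apply {k n : ℕ} (ω : Fin (k + 1) → S) (y : S) (i : Fin (n + 1))
    (hi : i.val ≤ k) : padPath (Fin.snoc ω y : Fin (k + 2) → S) i = padPath ω i := by
  rw [padPath_apply_of_le _ i (Nat.le_succ_of_le hi), padPath_apply_of_le ω i hi]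
  exact Fin.snoc_castSucc (α := fun _ => S) y ω ⟨i.val, Nat.lt_succ_of_le hi⟩

theorem IsNonanticipating.apply_castLE_padPath_snoc {N k : ℕ}
    {act : Fin N → (Fin (N + 1) → S) → A} (hact : IsNonanticipating act) (hk : k + 1 ≤ N)
    (ω : Fin (k + 1) → S) (y : S) (t : Fin (k + 1)) :
    act (Fin.castLE hk t) (padPath (Fin.snoc ω y : Fin (k + 2) → S)) =
      act (Fin.castLE hk t) (padPath ω) :=
  hact _ _ _ fun i hi => padPath_snoc_apply ω y i (hi.trans (Nat.lt_succ_iff.mp t.isLt))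

section DynamicProgramming

variable [Fintype S] [Fintype A] [Nonempty A] (p r : S → A → S → ℝ) (v : S → ℝ) (τ : ℝ)

/-- The value function of the augmented 0-1 MDP: `m` steps to go, current state `x`,
cumulative reward `c`. -/
noncomputable def optValue : ℕ → S → ℝ → ℝ
  | 0, x, c => if τ ≤ c + v x then 1 else 0
  | m + 1, x, c => Finset.univ.sup' Finset.univ_nonempty fun a =>
      ∑ y, p x a y * optValue m y (c + r x a y)

noncomputable def qValue (m : ℕ) (x : S) (c : ℝ) (a : A) : ℝ :=
  ∑ y, p x a y * optValue p r v τ m y (c + r x a y)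

theorem qValue_le_optValue_succ (m : ℕ) (x : S) (c : ℝ) (a : A) :
    qValue p r v τ m x c a ≤ optValue p r v τ (m + 1) x c :=
  Finset.le_sup' _ (Finset.mem_univ a)

noncomputable def greedyAct (m : ℕ) (x : S) (c : ℝ) : A :=
  (Finset.exists_mem_eq_sup' Finset.univ_nonempty (qValue p r v τ m x c)).choose

theorem qValue_greedyAct (m : ℕ) (x : S) (c : ℝ) :
    qValue p r v τ m x c (greedyAct p r v τ m x c) = optValue p r v τ (m + 1) x c :=
  (Finset.exists_mem_eq_sup' Finset.univ_nonempty (qValue p r v τ m x c)).choose_spec.2.symm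

noncomputable def optimalAugPolicy (N : ℕ) : Fin N → S × ℝ → A :=
  fun t xc => greedyAct p r v τ (N - (t.val + 1)) xc.1 xc.2

end DynamicProgramming

section Prefix

variable {N : ℕ} (p r : S → A → S → ℝ) (μ0 : S → ℝ) (act : Fin N → (Fin (N + 1) → S) → A)

def prefixProb {k : ℕ} (hk : k ≤ N) (ω : Fin (k + 1) → S) : ℝ :=
  μ0 (ω 0) * ∏ t : Fin k, p (ω t.castSucc) (act (Fin.castLE hk t) (padPath ω)) (ω t.succ)

def prefixReward {k : ℕ} (hk : k ≤ N) (ω : Fin (k + 1) → S) : ℝ :=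
  ∑ t : Fin k, r (ω t.castSucc) (act (Fin.castLE hk t) (padPath ω)) (ω t.succ)

variable {act}

theorem prefixProb_snoc (hact : IsNonanticipating act) {k : ℕ} (hk : k + 1 ≤ N)
    (ω : Fin (k + 1) → S) (y : S) :
    prefixProb p μ0 act hk (Fin.snoc ω y : Fin (k + 2) → S) =
      prefixProb p μ0 act (Nat.le_of_succ_le hk) ω *
        p (ω (Fin.last k)) (act ⟨k, hk⟩ (padPath ω)) y := by
  simp only [prefixProb, Fin.prod_univ_castSucc, hact.apply_castLE_padPath_snoc hk ω y,
    Fin.snoc_castSucc, Fin.succ_castSucc, Fin.succ_last, Fin.snoc_last, mul_assoc]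
  rfl

theorem prefixReward_snoc (hact : IsNonanticipating act) {k : ℕ} (hk : k + 1 ≤ N)
    (ω : Fin (k + 1) → S) (y : S) :
    prefixReward r act hk (Fin.snoc ω y : Fin (k + 2) → S) =
      prefixReward r act (Nat.le_of_succ_le hk) ω +
        r (ω (Fin.last k)) (act ⟨k, hk⟩ (padPath ω)) y := by
  simp only [prefixReward, Fin.sum_univ_castSucc, hact.apply_castLE_padPath_snoc hk ω y,
    Fin.snoc_castSucc, Fin.succ_castSucc, Fin.succ_last, Fin.snoc_last]
  rfl

theorem prefixProb_nonneg (hp0 : ∀ x a y, 0 ≤ p x a y) (hμ0 : ∀ x, 0 ≤ μ0 x) {k : ℕ}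
    (hk : k ≤ N) (ω : Fin (k + 1) → S) : 0 ≤ prefixProb p μ0 act hk ω :=
  mul_nonneg (hμ0 _) (Finset.prod_nonneg fun _ _ => hp0 _ _ _)

end Prefix

section PartialValue

variable [Fintype S] [Fintype A] [Nonempty A] {N : ℕ} (p r : S → A → S → ℝ) (μ0 : S → ℝ)
  (v : S → ℝ) (τ : ℝ) (act : Fin N → (Fin (N + 1) → S) → A)

noncomputable def partialValue {k : ℕ} (hk : k ≤ N) : ℝ :=
  ∑ ω : Fin (k + 1) → S, prefixProb p μ0 act hk ω *
    optValue p r v τ (N - k) (ω (Fin.last k)) (prefixReward r act hk ω)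

theorem partialValue_zero :
    partialValue p r μ0 v τ act (Nat.zero_le N) = ∑ x, μ0 x * optValue p r v τ N x 0 := by
  rw [partialValue, ← (Equiv.funUnique (Fin 1) S).symm.sum_comp]
  simp [prefixProb, prefixReward]

theorem partialValue_self : partialValue p r μ0 v τ act le_rfl = varProb N p r μ0 v τ act := by
  refine Finset.sum_congr rfl fun ω _ => ?_
  simp only [prefixProb, prefixReward, padPath_self, Nat.sub_self, optValue, Fin.castLE_refl]
  split_ifs <;> ring

variable {act}

theorem partialValue_succ (hact : IsNonanticipating act) {k : ℕ} (hk : k + 1 ≤ N) :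
    partialValue p r μ0 v τ act hk = ∑ ω : Fin (k + 1) → S,
      prefixProb p μ0 act (Nat.le_of_succ_le hk) ω *
        qValue p r v τ (N - (k + 1)) (ω (Fin.last k))
          (prefixReward r act (Nat.le_of_succ_le hk) ω) (act ⟨k, hk⟩ (padPath ω)) := by
  rw [partialValue, ← (Fin.snocEquiv fun _ => S).sum_comp, Fintype.sum_prod_type_right]
  refine Finset.sum_congr rfl fun ω _ => ?_
  have hsnoc (y : S) : (Fin.snocEquiv fun _ => S) (y, ω) = Fin.snoc ω y := rfl
  simp only [hsnoc, prefixProb_snoc p μ0 hact, prefixReward_snoc r hact, Fin.snoc_last, qValue,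
    Finset.mul_sum, mul_assoc]

theorem partialValue_succ_le (hp0 : ∀ x a y, 0 ≤ p x a y) (hμ0 : ∀ x, 0 ≤ μ0 x)
    (hact : IsNonanticipating act) {k : ℕ} (hk : k + 1 ≤ N) :
    partialValue p r μ0 v τ act hk ≤ partialValue p r μ0 v τ act (Nat.le_of_succ_le hk) := by
  rw [partialValue_succ p r μ0 v τ hact, partialValue, show N - k = N - (k + 1) + 1 by omega]
  exact Finset.sum_le_sum fun ω _ => mul_le_mul_of_nonneg_left
    (qValue_le_optValue_succ p r v τ _ _ _ _) (prefixProb_nonneg p μ0 hp0 hμ0 _ ω)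

theorem varProb_le_of_isNonanticipating (hp0 : ∀ x a y, 0 ≤ p x a y) (hμ0 : ∀ x, 0 ≤ μ0 x)
    (hact : IsNonanticipating act) :
    varProb N p r μ0 v τ act ≤ ∑ x, μ0 x * optValue p r v τ N x 0 := by
  suffices h : ∀ k (hk : k ≤ N),
      partialValue p r μ0 v τ act hk ≤ ∑ x, μ0 x * optValue p r v τ N x 0 by
    simpa only [partialValue_self] using h N le_rfl
  intro k
  induction k with
  | zero => exact fun _ => (partialValue_zero p r μ0 v τ act).le
  | succ k ih => exact fun hk => (partialValue_succ_le p r μ0 v τ hp0 hμ0 hact hk).trans (ih _)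

end PartialValue

section AugmentedPolicies

variable {N : ℕ} (r : S → A → S → ℝ) (σ : Fin N → S × ℝ → A)

theorem cumReward_eq_sum (ω : Fin (N + 1) → S) {k : ℕ} (hk : k ≤ N) :
    cumReward N r σ ω k = ∑ t : Fin k, r (ω (Fin.castLE hk t).castSucc)
      (augAct N r σ (Fin.castLE hk t) ω) (ω (Fin.castLE hk t).succ) := by
  induction k with
  | zero => simp [cumReward]
  | succ k ih =>
    rw [Fin.sum_univ_castSucc, cumReward, dif_pos (Nat.lt_of_succ_le hk)]
    exact congrArg (· + _) (ih (Nat.le_of_succ_le hk))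

theorem cumReward_padPath {k : ℕ} (hk : k ≤ N) (ω : Fin (k + 1) → S) :
    cumReward N r σ (padPath ω) k = prefixReward r (augAct N r σ) hk ω := by
  rw [cumReward_eq_sum r σ _ hk]
  refine Finset.sum_congr rfl fun t _ => ?_
  rw [padPath_apply_of_le ω (Fin.castLE hk t).castSucc t.isLt.le,
    padPath_apply_of_le ω (Fin.castLE hk t).succ t.isLt]
  rfl

theorem augAct_padPath {k : ℕ} (hk : k + 1 ≤ N) (ω : Fin (k + 1) → S) :
    augAct N r σ ⟨k, hk⟩ (padPath ω) =
      σ ⟨k, hk⟩ (ω (Fin.last k), prefixReward r (augAct N r σ) (Nat.le_of_succ_le hk) ω) := by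
  rw [augAct, cumReward_padPath r σ (Nat.le_of_succ_le hk), padPath_apply_of_le ω _ le_rfl]
  rfl

noncomputable def augToHist : (t : Fin N) → (Fin (t.val + 1) → S) → A :=
  fun t h => σ t (h (Fin.last t.val), cumReward N r σ (padPath h) t.val)

theorem histAct_augToHist : histAct N (augToHist r σ) = augAct N r σ := by
  funext t ω
  refine congrArg (σ t) (Prod.ext rfl (cumReward_congr r σ fun i hi => ?_))
  rw [padPath_apply_of_le _ i hi]
  rfl

end AugmentedPolicies

section Optimality

variable [Fintype S] [Fintype A] [Nonempty A] {N : ℕ} (p r : S → A → S → ℝ) (μ0 : S → ℝ)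
  (v : S → ℝ) (τ : ℝ)

theorem partialValue_optimalAugPolicy_succ {k : ℕ} (hk : k + 1 ≤ N) :
    partialValue p r μ0 v τ (augAct N r (optimalAugPolicy p r v τ N)) hk =
      partialValue p r μ0 v τ (augAct N r (optimalAugPolicy p r v τ N))
        (Nat.le_of_succ_le hk) := by
  rw [partialValue_succ p r μ0 v τ (augAct_isNonanticipating N r _), partialValue,
    show N - k = N - (k + 1) + 1 by omega]
  refine Finset.sum_congr rfl fun ω _ => ?_
  rw [augAct_padPath, optimalAugPolicy, qValue_greedyAct]

theorem varProb_optimalAugPolicy :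
    varProb N p r μ0 v τ (augAct N r (optimalAugPolicy p r v τ N)) =
      ∑ x, μ0 x * optValue p r v τ N x 0 := by
  suffices h : ∀ k (hk : k ≤ N), partialValue p r μ0 v τ
      (augAct N r (optimalAugPolicy p r v τ N)) hk = ∑ x, μ0 x * optValue p r v τ N x 0 by
    simpa only [partialValue_self] using h N le_rfl
  intro k
  induction k with
  | zero => exact fun _ => partialValue_zero p r μ0 v τ _
  | succ k ih => exact fun hk => (partialValue_optimalAugPolicy_succ p r μ0 v τ hk).trans (ih _)

end Optimality

end VaRMDP

open VaRMDP

theorem varProb_hist_sup_eq_aug_sup_general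
    {S A : Type} [Fintype S] [Fintype A] [Nonempty A]
    (N : ℕ)
    (p : S → A → S → ℝ)
    (hp0 : ∀ x a y, 0 ≤ p x a y)
    (r : S → A → S → ℝ)
    (μ0 : S → ℝ) (hμ0 : ∀ x, 0 ≤ μ0 x)
    (v : S → ℝ) (τ : ℝ) :
    sSup {q : ℝ | ∃ π : (t : Fin N) → (Fin (t.val + 1) → S) → A,
        q = varProb N p r μ0 v τ (histAct N π)}
    = sSup {q : ℝ | ∃ σ : Fin N → S × ℝ → A,
        q = varProb N p r μ0 v τ (augAct N r σ)} := by
  have hopt := varProb_optimalAugPolicy p r μ0 v τ (N := N)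
  have hhist : IsGreatest {q : ℝ | ∃ π : (t : Fin N) → (Fin (t.val + 1) → S) → A,
      q = varProb N p r μ0 v τ (histAct N π)} (∑ x, μ0 x * optValue p r v τ N x 0) := by
    refine ⟨⟨augToHist r (optimalAugPolicy p r v τ N), ?_⟩, ?_⟩
    · rw [histAct_augToHist, hopt]
    · rintro q ⟨π, rfl⟩
      exact varProb_le_of_isNonanticipating p r μ0 v τ hp0 hμ0 (histAct_isNonanticipating N π)
  have haug : IsGreatest {q : ℝ | ∃ σ : Fin N → S × ℝ → A,
      q = varProb N p r μ0 v τ (augAct N r σ)} (∑ x, μ0 x * optValue p r v τ N x 0) := by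
    refine ⟨⟨optimalAugPolicy p r v τ N, hopt.symm⟩, ?_⟩
    rintro q ⟨σ, rfl⟩
    exact varProb_le_of_isNonanticipating p r μ0 v τ hp0 hμ0 (augAct_isNonanticipating N r σ)
  rw [hhist.csSup_eq, haug.csSup_eq]

/-- Lemma 1 (sufficiency of the cumulative-reward-augmented state for VaR): the
supremum of `P_π(Φ_π ≥ τ)` over all history-dependent deterministic policies equals
the supremum over the history-dependent policies induced by augmented policies
`σ : Fin N → S × ℝ → A` acting on the pair (current state, cumulative reward);
i.e. the optimal VaR probability of the original MDP equals the optimal value of the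
augmented-state 0-1 MDP with terminal indicator reward `1[c_N + v(x_N) ≥ τ]`. -/
theorem varProb_hist_sup_eq_aug_sup
    {S A : Type} [Fintype S] [Fintype A] [Nonempty S] [Nonempty A]
    (N : ℕ) (hN : 1 ≤ N)
    (p : S → A → S → ℝ)
    (hp0 : ∀ x a y, 0 ≤ p x a y)
    (hp1 : ∀ x a, ∑ y, p x a y = 1)
    (r : S → A → S → ℝ)
    (μ0 : S → ℝ) (hμ0 : ∀ x, 0 ≤ μ0 x) (hμ1 : ∑ x, μ0 x = 1)
    (v : S → ℝ) (τ : ℝ) :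
    sSup {q : ℝ | ∃ π : (t : Fin N) → (Fin (t.val + 1) → S) → A,
        q = varProb N p r μ0 v τ (histAct N π)}
    = sSup {q : ℝ | ∃ σ : Fin N → S × ℝ → A,
        q = varProb N p r μ0 v τ (augAct N r σ)} :=
  varProb_hist_sup_eq_aug_sup_general N p hp0 r μ0 hμ0 v τ
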